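/- Let (H,{F_A},{F_G}) be a GR(1) game with singleton winning conditions. Then for every state q ∉ ⟦φ₄⟧ and every system strategy f¹ over H, at least one of the following fails: (i) ∅ ≠ L_q(H,f¹) ⊆ L̄_q(H,F_A) ∪ L_q(H,F_G); (ii) Pre(L_q(H,f¹)) = Pre(L_q(H,f¹) ∩ L_q(H,F_A)). -/
import Mathlib


namespace GR1

/-- A two-player game graph `H = ⟨Q⁰, Q¹, δ⁰, δ¹, q₀⟩`.  `env` is the set `Q⁰` of
environment states, `sys` the set `Q¹` of system states, and `delta` combines the
transition functions `δ⁰` and `δ¹`. -/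
structure GameGraph (Q : Type*) where
  env : Set Q
  sys : Set Q
  delta : Q → Set Q
  disjoint_env_sys : Disjoint env sys
  union_env_sys : env ∪ sys = Set.univ
  delta_env : ∀ q ∈ env, delta q ⊆ sys
  delta_sys : ∀ q ∈ sys, delta q ⊆ env
  delta_nonempty : ∀ q, (delta q).Nonempty
  init : Q
  init_env : init ∈ env

namespace GameGraph

/-- The existential predecessor operator `Pre∃`. -/
def PreE {Q : Type*} (G : GameGraph Q) (P : Set Q) : Set Q :=
  {q | (G.delta q ∩ P).Nonempty}

/-- The universal predecessor operator `Pre∀`. -/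
def PreA {Q : Type*} (G : GameGraph Q) (P : Set Q) : Set Q :=
  {q | G.delta q ⊆ P}

/-- The player-0 (environment) controllable predecessor operator `Pre⁰`. -/
def Pre0 {Q : Type*} (G : GameGraph Q) (P : Set Q) : Set Q :=
  {q | q ∈ G.env ∧ (G.delta q ∩ P).Nonempty} ∪ {q | q ∈ G.sys ∧ G.delta q ⊆ P}

/-- The player-1 (system) controllable predecessor operator `Pre¹`. -/
def Pre1 {Q : Type*} (G : GameGraph Q) (P : Set Q) : Set Q :=
  {q | q ∈ G.env ∧ G.delta q ⊆ P} ∪ {q | q ∈ G.sys ∧ (G.delta q ∩ P).Nonempty}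

/-- The conditional predecessor `Precond(P,P') = Pre∃(P) ∩ Pre¹(P ∪ P')`. -/
def Precond {Q : Type*} (G : GameGraph Q) (P P' : Set Q) : Set Q :=
  G.PreE P ∩ G.Pre1 (P ∪ P')

/-- The dual conditional predecessor `Precondᶜ(P,P') = Pre∀(P) ∪ Pre⁰(P ∩ P')`. -/
def PrecondC {Q : Type*} (G : GameGraph Q) (P P' : Set Q) : Set Q :=
  G.PreA P ∪ G.Pre0 (P ∩ P')

end GameGraph

/-- Knaster–Tarski least fixed point over the powerset lattice. -/
def lfpSet {Q : Type*} (F : Set Q → Set Q) : Set Q := ⋂₀ {S | F S ⊆ S}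

/-- Knaster–Tarski greatest fixed point over the powerset lattice. -/
def gfpSet {Q : Type*} (F : Set Q → Set Q) : Set Q := ⋃₀ {S | S ⊆ F S}

/-- Knaster–Tarski least fixed point over the lattice of vectors of sets. -/
def lfpVec {Q : Type*} {n : ℕ} (F : (Fin n → Set Q) → (Fin n → Set Q)) : Fin n → Set Q :=
  fun a => ⋂ V ∈ {V : Fin n → Set Q | ∀ a', F V a' ⊆ V a'}, V a

/-- Knaster–Tarski greatest fixed point over the lattice of vectors of sets. -/
def gfpVec {Q : Type*} {n : ℕ} (F : (Fin n → Set Q) → (Fin n → Set Q)) : Fin n → Set Q :=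
  fun a => ⋃ V ∈ {V : Fin n → Set Q | ∀ a', V a' ⊆ F V a'}, V a

/-- Cyclic successor of a mode: `a⁺ = (a mod n) + 1` in 1-based counting. -/
def modeSucc {n : ℕ} (a : Fin n) : Fin n :=
  ⟨(a.val + 1) % n, Nat.mod_lt _ a.pos⟩

/-- `π` is an (infinite) play over `G` starting in the state `q`. -/
def IsPlayFrom {Q : Type*} (G : GameGraph Q) (q : Q) (π : ℕ → Q) : Prop :=
  π 0 = q ∧ ∀ k, π (k + 1) ∈ G.delta (π k)

/-- `Inf(π) ∩ F ≠ ∅` : the play `π` visits the set `F` infinitely often. -/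
def InfOft {Q : Type*} (π : ℕ → Q) (F : Set Q) : Prop := ∀ n, ∃ k, n ≤ k ∧ π k ∈ F

/-- `L_q(H,F)` : plays from `q` satisfying the Büchi condition `F`. -/
def LBuchi {Q : Type*} (G : GameGraph Q) (q : Q) (F : Set Q) : Set (ℕ → Q) :=
  {π | IsPlayFrom G q π ∧ InfOft π F}

/-- `L_q(H,𝓕)` : plays from `q` satisfying the generalized Büchi condition `𝓕`. -/
def LGenBuchi {Q ι : Type*} (G : GameGraph Q) (q : Q) (F : ι → Set Q) : Set (ℕ → Q) :=
  {π | IsPlayFrom G q π ∧ ∀ i, InfOft π (F i)}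

/-- `Pre(L)` : the set of all finite prefixes of the (infinite) words in `L`. -/
def prefixes {Q : Type*} (L : Set (ℕ → Q)) : Set (List Q) :=
  {w | ∃ π ∈ L, ∃ k, w = (List.range k).map π}

/-- A (history dependent) system strategy: on a history ending in a system state it
produces a `δ¹`-successor of that state. -/
def IsSysStrategy {Q : Type*} (G : GameGraph Q) (f : List Q → Q) : Prop :=
  ∀ (w : List Q) (q : Q), q ∈ G.sys → f (w ++ [q]) ∈ G.delta q

/-- The finite history `π|_{[0,k]}` of a play. -/
def histUpTo {Q : Type*} (π : ℕ → Q) (k : ℕ) : List Q := (List.range (k + 1)).map π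

/-- `L_q(H,f¹)` : plays from `q` compliant with the system strategy `f¹`. -/
def Lstrat {Q : Type*} (G : GameGraph Q) (q : Q) (f : List Q → Q) : Set (ℕ → Q) :=
  {π | IsPlayFrom G q π ∧ ∀ k, π k ∈ G.sys → π (k + 1) = f (histUpTo π k)}

/-- `L_q(H,f¹)` for a memoryless system strategy `f¹ : Q → Q`. -/
def Lmem {Q : Type*} (G : GameGraph Q) (q : Q) (f : Q → Q) : Set (ℕ → Q) :=
  {π | IsPlayFrom G q π ∧ ∀ k, π k ∈ G.sys → π (k + 1) = f (π k)}

/-- Strict lexicographic order on ranks. -/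
def rankLt (p r : ℕ × ℕ) : Prop := p.1 < r.1 ∨ (p.1 = r.1 ∧ p.2 < r.2)

/-- Lexicographic order on ranks. -/
def rankLe (p r : ℕ × ℕ) : Prop := p.1 < r.1 ∨ (p.1 = r.1 ∧ p.2 ≤ r.2)

/-! ### The 4-nested fixed point `φ₄` for singleton winning conditions -/

/-- The body `(F_G ∩ Pre¹(Z)) ∪ Pre¹(Y) ∪ ((Q∖F_A) ∩ Precond(W, X∖F_A))`. -/
def body {Q : Type*} (G : GameGraph Q) (FA FG Z Y X W : Set Q) : Set Q :=
  (FG ∩ G.Pre1 Z) ∪ G.Pre1 Y ∪ (FAᶜ ∩ G.Precond W (X \ FA))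

def innerW {Q : Type*} (G : GameGraph Q) (FA FG Z Y X : Set Q) : Set Q :=
  lfpSet (fun W => body G FA FG Z Y X W)

def innerX {Q : Type*} (G : GameGraph Q) (FA FG Z Y : Set Q) : Set Q :=
  gfpSet (fun X => innerW G FA FG Z Y X)

def innerY {Q : Type*} (G : GameGraph Q) (FA FG Z : Set Q) : Set Q :=
  lfpSet (fun Y => innerX G FA FG Z Y)

/-- `⟦φ₄⟧ = Z^∞` : the value of `νZ.μY.νX.μW. (F_G ∩ Pre¹(Z)) ∪ Pre¹(Y) ∪
((Q∖F_A) ∩ Precond(W, X∖F_A))`. -/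
def phi4 {Q : Type*} (G : GameGraph Q) (FA FG : Set Q) : Set Q :=
  gfpSet (fun Z => innerY G FA FG Z)

/-- The approximants `Yⁱ` of `Y` in the terminal iteration over `Z` (`Y⁰ = ∅`). -/
def Yapprox {Q : Type*} (G : GameGraph Q) (FA FG : Set Q) : ℕ → Set Q
  | 0 => ∅
  | i + 1 => innerX G FA FG (phi4 G FA FG) (Yapprox G FA FG i)

/-- The approximants `Wⁱ_j` of `W` computed with `X = Xⁱ = Yⁱ` and `Y = Yⁱ⁻¹`. -/
def Wapprox {Q : Type*} (G : GameGraph Q) (FA FG : Set Q) (i : ℕ) : ℕ → Set Q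
  | 0 => ∅
  | j + 1 =>
      body G FA FG (phi4 G FA FG) (Yapprox G FA FG (i - 1)) (Yapprox G FA FG i)
        (Wapprox G FA FG i j)

/-- `rank(q) = (i,j)` iff `q ∈ (Yⁱ∖Yⁱ⁻¹) ∩ (Wⁱ_j∖Wⁱ_{j−1})` with `i,j > 0`. -/
def hasRank {Q : Type*} (G : GameGraph Q) (FA FG : Set Q) (q : Q) (i j : ℕ) : Prop :=
  0 < i ∧ 0 < j ∧
    q ∈ (Yapprox G FA FG i \ Yapprox G FA FG (i - 1)) ∩
        (Wapprox G FA FG i j \ Wapprox G FA FG i (j - 1))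

/-- The memoryless system strategy extracted from the ranking: `f¹(q) ∈ δ¹(q)`,
`rank(f¹(q)) < rank(q)` whenever `rank(q) > (1,1)`, and `f¹(q) ∈ Z^∞` otherwise. -/
def GoodStrategy {Q : Type*} (G : GameGraph Q) (FA FG : Set Q) (f : Q → Q) : Prop :=
  ∀ q, q ∈ G.sys → q ∈ phi4 G FA FG →
    f q ∈ G.delta q ∧
      ∀ i j, hasRank G FA FG q i j →
        (((i, j) = ((1 : ℕ), (1 : ℕ)) → f q ∈ phi4 G FA FG) ∧
          ((i, j) ≠ ((1 : ℕ), (1 : ℕ)) →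
            ∃ i' j', hasRank G FA FG (f q) i' j' ∧ rankLt (i', j') (i, j)))

/-! ### The negated fixed point `φ̄₄` (singleton conditions) -/

/-- The simplified negated body
`Pre⁰(Z̄) ∪ ((Q∖F_G) ∩ F_A ∩ Pre⁰(Ȳ)) ∪ ((Q∖F_G) ∩ Precondᶜ(W̄, X̄ ∪ F_A))`. -/
def nbody {Q : Type*} (G : GameGraph Q) (FA FG Z Y X W : Set Q) : Set Q :=
  G.Pre0 Z ∪ (FGᶜ ∩ FA ∩ G.Pre0 Y) ∪ (FGᶜ ∩ G.PrecondC W (X ∪ FA))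

/-- The simplified negated fixed point `φ̄₄ = μZ̄.νȲ.μX̄.νW̄. nbody`. -/
def phi4neg {Q : Type*} (G : GameGraph Q) (FA FG : Set Q) : Set Q :=
  lfpSet (fun Z => gfpSet (fun Y => lfpSet (fun X => gfpSet (fun W =>
    nbody G FA FG Z Y X W))))

/-- The unsimplified negation body
`((Q∖F_G) ∪ Pre⁰(Z̄)) ∩ Pre⁰(Ȳ) ∩ (F_A ∪ Precondᶜ(W̄, X̄ ∪ F_A))`. -/
def nbodyRaw {Q : Type*} (G : GameGraph Q) (FA FG Z Y X W : Set Q) : Set Q :=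
  (FGᶜ ∪ G.Pre0 Z) ∩ G.Pre0 Y ∩ (FA ∪ G.PrecondC W (X ∪ FA))

/-- The unsimplified negated fixed point. -/
def phi4negRaw {Q : Type*} (G : GameGraph Q) (FA FG : Set Q) : Set Q :=
  lfpSet (fun Z => gfpSet (fun Y => lfpSet (fun X => gfpSet (fun W =>
    nbodyRaw G FA FG Z Y X W))))

/-- The approximants `Z̄ⁱ` of the negated fixed point (`Z̄⁰ = ∅`). -/
def Zbar {Q : Type*} (G : GameGraph Q) (FA FG : Set Q) : ℕ → Set Q
  | 0 => ∅
  | i + 1 =>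
      gfpSet (fun Y => lfpSet (fun X => gfpSet (fun W =>
        nbody G FA FG (Zbar G FA FG i) Y X W)))

/-- The approximants `X̄ⁱ_j` of `X̄` computed while computing `Z̄ⁱ` (using `Ȳ = Z̄ⁱ` and
`Z̄ = Z̄ⁱ⁻¹`), with `X̄ⁱ₀ = ∅`. -/
def Xbar {Q : Type*} (G : GameGraph Q) (FA FG : Set Q) (i : ℕ) : ℕ → Set Q
  | 0 => ∅
  | j + 1 =>
      gfpSet (fun W =>
        nbody G FA FG (Zbar G FA FG (i - 1)) (Zbar G FA FG i) (Xbar G FA FG i j) W)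

/-- The negated rank: `rank(q) = (i,j)` iff `q ∈ X̄ⁱ_j ∖ X̄ⁱ_{j−1}` with `i,j > 0`. -/
def nrank {Q : Type*} (G : GameGraph Q) (FA FG : Set Q) (q : Q) (i j : ℕ) : Prop :=
  0 < i ∧ 0 < j ∧ q ∈ Xbar G FA FG i j \ Xbar G FA FG i (j - 1)

/-- Environment moves permitted during the inductive construction of the reachable
region `R_{f¹}` (cases (a'), (b'), (c'2), (c'3) and the remaining case (c'1)). -/
def envStep {Q : Type*} (G : GameGraph Q) (FA FG : Set Q) (q' q'' : Q) : Prop :=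
  q'' ∈ G.delta q' ∧
    ∃ i j, nrank G FA FG q' i j ∧
      ((q'' ∈ (phi4 G FA FG)ᶜ ∧ ∃ i' j', nrank G FA FG q'' i' j' ∧ i' ≤ i - 1) ∨
       (q' ∈ FA \ FG ∧ q'' ∈ (phi4 G FA FG)ᶜ ∧
          ∃ i' j', nrank G FA FG q'' i' j' ∧ i' ≤ i) ∨
       (q'' ∈ (phi4 G FA FG)ᶜ ∧
          ∃ i' j', nrank G FA FG q'' i' j' ∧ rankLe (i', j') (i, j - 1)) ∨
       (q'' ∈ (phi4 G FA FG)ᶜ ∧ q'' ∈ FA ∧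
          ∃ i' j', nrank G FA FG q'' i' j' ∧ rankLe (i', j') (i, j)) ∨
       (∀ p ∈ G.delta q', p ∈ (phi4 G FA FG)ᶜ ∧
          ∃ i' j', nrank G FA FG p i' j' ∧ rankLe (i', j') (i, j)))

/-- `L_q(H,f¹,R_{f¹})` : plays from `q` compliant with `f¹` that remain within the
reachable region `R_{f¹}`, i.e. in which every environment move follows the rules of
the inductive construction of `R_{f¹}`. -/
def Lrestr {Q : Type*} (G : GameGraph Q) (FA FG : Set Q) (q : Q) (f : List Q → Q) :
    Set (ℕ → Q) :=
  {π | π ∈ Lstrat G q f ∧ ∀ k, π k ∈ G.env → envStep G FA FG (π k) (π (k + 1))}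

/-! ### The vectorized fixed point `φ₄ᵛ` for general GR(1) conditions -/

/-- The body `Ω^{ab}` of the vectorized fixed point. -/
def bodyV {Q : Type*} {n m : ℕ} (G : GameGraph Q) (FAv : Fin m → Set Q)
    (FGv : Fin n → Set Q) (Zv : Fin n → Set Q) (a : Fin n) (b : Fin m)
    (Y X W : Set Q) : Set Q :=
  (FGv a ∩ G.Pre1 (Zv (modeSucc a))) ∪ G.Pre1 Y ∪ ((FAv b)ᶜ ∩ G.Precond W (X \ FAv b))

def innerWV {Q : Type*} {n m : ℕ} (G : GameGraph Q) (FAv : Fin m → Set Q)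
    (FGv : Fin n → Set Q) (Zv : Fin n → Set Q) (a : Fin n) (b : Fin m)
    (Y X : Set Q) : Set Q :=
  lfpSet (fun W => bodyV G FAv FGv Zv a b Y X W)

def innerXV {Q : Type*} {n m : ℕ} (G : GameGraph Q) (FAv : Fin m → Set Q)
    (FGv : Fin n → Set Q) (Zv : Fin n → Set Q) (a : Fin n) (b : Fin m)
    (Y : Set Q) : Set Q :=
  gfpSet (fun X => innerWV G FAv FGv Zv a b Y X)

/-- The vector `[Z¹,…,Zⁿ]` of the vectorized fixed point `φ₄ᵛ`. -/
def phi4v {Q : Type*} {n m : ℕ} (G : GameGraph Q) (FAv : Fin m → Set Q)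
    (FGv : Fin n → Set Q) : Fin n → Set Q :=
  gfpVec (fun Zv a => lfpSet (fun Y => ⋃ b, innerXV G FAv FGv Zv a b Y))

/-- `⟦φ₄ᵛ⟧ = Z^∞ = ⋃_a Zᵃ^∞`. -/
def phi4vSem {Q : Type*} {n m : ℕ} (G : GameGraph Q) (FAv : Fin m → Set Q)
    (FGv : Fin n → Set Q) : Set Q :=
  ⋃ a, phi4v G FAv FGv a

/-- The approximants `ᵃYⁱ` (with `ᵃY⁰ = ∅`) of `Yᵃ` in the terminal iteration. -/
def YapproxV {Q : Type*} {n m : ℕ} (G : GameGraph Q) (FAv : Fin m → Set Q)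
    (FGv : Fin n → Set Q) (a : Fin n) : ℕ → Set Q
  | 0 => ∅
  | i + 1 => ⋃ b, innerXV G FAv FGv (phi4v G FAv FGv) a b (YapproxV G FAv FGv a i)

/-- The fixed point `ᵃᵇXⁱ` of `X^{ab}` computed during the `i`-th iteration. -/
def XfixV {Q : Type*} {n m : ℕ} (G : GameGraph Q) (FAv : Fin m → Set Q)
    (FGv : Fin n → Set Q) (a : Fin n) (b : Fin m) (i : ℕ) : Set Q :=
  innerXV G FAv FGv (phi4v G FAv FGv) a b (YapproxV G FAv FGv a (i - 1))

/-- The approximants `ᵃᵇWⁱ_j` of `W^{ab}` computed while computing `ᵃYⁱ`. -/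
def WapproxV {Q : Type*} {n m : ℕ} (G : GameGraph Q) (FAv : Fin m → Set Q)
    (FGv : Fin n → Set Q) (a : Fin n) (b : Fin m) (i : ℕ) : ℕ → Set Q
  | 0 => ∅
  | j + 1 =>
      bodyV G FAv FGv (phi4v G FAv FGv) a b (YapproxV G FAv FGv a (i - 1))
        (XfixV G FAv FGv a b i) (WapproxV G FAv FGv a b i j)

/-- The mode-based rank: `ᵃᵇrank(q) = (i,j)` iff
`q ∈ (ᵃYⁱ∖ᵃYⁱ⁻¹) ∩ (ᵃᵇWⁱ_j∖ᵃᵇWⁱ_{j−1})` with `i,j > 0`. -/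
def hasRankV {Q : Type*} {n m : ℕ} (G : GameGraph Q) (FAv : Fin m → Set Q)
    (FGv : Fin n → Set Q) (a : Fin n) (b : Fin m) (q : Q) (i j : ℕ) : Prop :=
  0 < i ∧ 0 < j ∧
    q ∈ (YapproxV G FAv FGv a i \ YapproxV G FAv FGv a (i - 1)) ∩
        (WapproxV G FAv FGv a b i j \ WapproxV G FAv FGv a b i (j - 1))

/-- The finite-memory system strategy extracted from the mode-based ranking. -/
def GoodStrategyV {Q : Type*} {n m : ℕ} (G : GameGraph Q) (FAv : Fin m → Set Q)
    (FGv : Fin n → Set Q) (f : Q × Fin n × Fin m → Q × Fin n × Fin m) : Prop :=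
  ∀ (q : Q) (a : Fin n) (b : Fin m), q ∈ G.sys → q ∈ phi4v G FAv FGv a →
    (f (q, a, b)).1 ∈ G.delta q ∧
      ∀ i j, hasRankV G FAv FGv a b q i j →
        (((i, j) = ((1 : ℕ), (1 : ℕ)) →
            (f (q, a, b)).1 ∈ phi4v G FAv FGv (modeSucc a) ∧
              (f (q, a, b)).2.1 = modeSucc a) ∧
          (1 < i ∧ j = 1 →
            (f (q, a, b)).2.1 = a ∧
              ∃ i' j',
                hasRankV G FAv FGv a ((f (q, a, b)).2.2) ((f (q, a, b)).1) i' j' ∧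
                  i' ≤ i - 1) ∧
          (1 < j →
            (f (q, a, b)).2.1 = a ∧ (f (q, a, b)).2.2 = b ∧
              ∃ i' j',
                hasRankV G FAv FGv a b ((f (q, a, b)).1) i' j' ∧
                  rankLe (i', j') (i, j - 1)))

/-- Compliance of a play with a finite-memory strategy via mode traces `α`, `β`. -/
def CompliantModeV {Q : Type*} {n m : ℕ} (G : GameGraph Q) (FAv : Fin m → Set Q)
    (FGv : Fin n → Set Q) (f : Q × Fin n × Fin m → Q × Fin n × Fin m)
    (π : ℕ → Q) (α : ℕ → Fin n) (β : ℕ → Fin m) : Prop :=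
  ∀ k,
    (π k ∈ G.sys → (π (k + 1), α (k + 1), β (k + 1)) = f (π k, α k, β k)) ∧
      (π k ∈ G.env →
        (hasRankV G FAv FGv (α k) (β k) (π (k + 1)) 1 1 →
            α (k + 1) = modeSucc (α k)) ∧
          ((∃ i, 1 < i ∧ hasRankV G FAv FGv (α k) (β k) (π (k + 1)) i 1) →
            α (k + 1) = α k) ∧
          ((∃ i j, 1 < j ∧ hasRankV G FAv FGv (α k) (β k) (π (k + 1)) i j) →
            α (k + 1) = α k ∧ β (k + 1) = β k))

/-- `L_q(H,f¹)` for a finite-memory strategy: plays from `q` compliant with `f¹`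
for some mode traces. -/
def LmodeV {Q : Type*} {n m : ℕ} (G : GameGraph Q) (FAv : Fin m → Set Q)
    (FGv : Fin n → Set Q) (q : Q) (f : Q × Fin n × Fin m → Q × Fin n × Fin m) :
    Set (ℕ → Q) :=
  {π | IsPlayFrom G q π ∧ ∃ α β, CompliantModeV G FAv FGv f π α β}

/-- `ᵃD = F_Gᵃ ∩ Pre¹(Z^{a⁺,∞})`. -/
def DsetV {Q : Type*} {n m : ℕ} (G : GameGraph Q) (FAv : Fin m → Set Q)
    (FGv : Fin n → Set Q) (a : Fin n) : Set Q :=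
  FGv a ∩ G.Pre1 (phi4v G FAv FGv (modeSucc a))

/-- `ᵃEⁱ = Pre¹(ᵃYⁱ⁻¹) ∖ ᵃYⁱ⁻¹`. -/
def EsetV {Q : Type*} {n m : ℕ} (G : GameGraph Q) (FAv : Fin m → Set Q)
    (FGv : Fin n → Set Q) (a : Fin n) (i : ℕ) : Set Q :=
  G.Pre1 (YapproxV G FAv FGv a (i - 1)) \ YapproxV G FAv FGv a (i - 1)

/-- `ᵃᵇΘⁱ_j = (Q∖F_Aᵇ) ∩ Precond(ᵃᵇWⁱ_{j−1}, ᵃᵇXⁱ∖F_Aᵇ)`. -/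
def ThetaV {Q : Type*} {n m : ℕ} (G : GameGraph Q) (FAv : Fin m → Set Q)
    (FGv : Fin n → Set Q) (a : Fin n) (b : Fin m) (i j : ℕ) : Set Q :=
  (FAv b)ᶜ ∩ G.Precond (WapproxV G FAv FGv a b i (j - 1)) (XfixV G FAv FGv a b i \ FAv b)

/-- `ᵃᵇRⁱ_j = ᵃᵇΘⁱ_j ∖ (ᵃᵇWⁱ_{j−1} ∪ ᵃYⁱ⁻¹ ∪ ᵃEⁱ ∪ ᵃD)`. -/
def RsetV {Q : Type*} {n m : ℕ} (G : GameGraph Q) (FAv : Fin m → Set Q)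
    (FGv : Fin n → Set Q) (a : Fin n) (b : Fin m) (i j : ℕ) : Set Q :=
  ThetaV G FAv FGv a b i j \
    (WapproxV G FAv FGv a b i (j - 1) ∪ YapproxV G FAv FGv a (i - 1) ∪
      EsetV G FAv FGv a i ∪ DsetV G FAv FGv a)

/-! ### The negated vectorized fixed point -/

/-- The body of the negated vectorized fixed point. -/
def nbodyV {Q : Type*} {n m : ℕ} (G : GameGraph Q) (FAv : Fin m → Set Q)
    (FGv : Fin n → Set Q) (Zv : Fin n → Set Q) (a : Fin n) (b : Fin m)
    (Y X W : Set Q) : Set Q :=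
  G.Pre0 (Zv (modeSucc a)) ∪ ((FGv a)ᶜ ∩ FAv b ∩ G.Pre0 Y) ∪
    ((FGv a)ᶜ ∩ G.PrecondC W (X ∪ FAv b))

/-- The coordinated approximants `Z̄ᵃⁱ` of the negated vectorized fixed point. -/
def ZbarV {Q : Type*} {n m : ℕ} (G : GameGraph Q) (FAv : Fin m → Set Q)
    (FGv : Fin n → Set Q) : ℕ → Fin n → Set Q
  | 0 => fun _ => ∅
  | i + 1 => fun a =>
      gfpSet (fun Y => ⋂ b, lfpSet (fun X => gfpSet (fun W =>
        nbodyV G FAv FGv (ZbarV G FAv FGv i) a b Y X W)))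

/-- The approximants `X̄^{ab,i}_j` of `X̄^{ab}` computed during the `i`-th iteration. -/
def XbarV {Q : Type*} {n m : ℕ} (G : GameGraph Q) (FAv : Fin m → Set Q)
    (FGv : Fin n → Set Q) (a : Fin n) (b : Fin m) (i : ℕ) : ℕ → Set Q
  | 0 => ∅
  | j + 1 =>
      gfpSet (fun W =>
        nbodyV G FAv FGv (ZbarV G FAv FGv (i - 1)) a b (ZbarV G FAv FGv i a)
          (XbarV G FAv FGv a b i j) W)

/-- The negated mode-based rank: `ᵃᵇrank(q) = (i,j)` iff `q ∈ X̄^{ab,i}_j∖X̄^{ab,i}_{j−1}`. -/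
def nrankV {Q : Type*} {n m : ℕ} (G : GameGraph Q) (FAv : Fin m → Set Q)
    (FGv : Fin n → Set Q) (a : Fin n) (b : Fin m) (q : Q) (i j : ℕ) : Prop :=
  0 < i ∧ 0 < j ∧ q ∈ XbarV G FAv FGv a b i j \ XbarV G FAv FGv a b i (j - 1)

/-- Environment moves permitted during the inductive construction of `R_{f¹}`
in the vectorized setting. -/
def envStepV {Q : Type*} {n m : ℕ} (G : GameGraph Q) (FAv : Fin m → Set Q)
    (FGv : Fin n → Set Q) (q' q'' : Q) : Prop :=
  q'' ∈ G.delta q' ∧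
    ∃ (a : Fin n) (b : Fin m) (i j : ℕ), nrankV G FAv FGv a b q' i j ∧
      ((q'' ∈ (phi4vSem G FAv FGv)ᶜ ∧
          ∃ b' i' j', nrankV G FAv FGv (modeSucc a) b' q'' i' j' ∧ i' ≤ i - 1) ∨
       (q' ∈ FAv b \ FGv a ∧ q'' ∈ (phi4vSem G FAv FGv)ᶜ ∧
          ∃ b' i' j', nrankV G FAv FGv a b' q'' i' j' ∧ i' ≤ i) ∨
       (q'' ∈ (phi4vSem G FAv FGv)ᶜ ∧
          ∃ i' j', nrankV G FAv FGv a b q'' i' j' ∧ rankLe (i', j') (i, j - 1)) ∨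
       (q'' ∈ (phi4vSem G FAv FGv)ᶜ ∧ q'' ∈ FAv b ∧
          ∃ i' j', nrankV G FAv FGv a b q'' i' j' ∧ rankLe (i', j') (i, j)) ∨
       (∀ p ∈ G.delta q', p ∈ (phi4vSem G FAv FGv)ᶜ ∧
          ∃ i' j', nrankV G FAv FGv a b p i' j' ∧ rankLe (i', j') (i, j)))

/-- `L_q(H,f¹,R_{f¹})` in the vectorized setting. -/
def LrestrV {Q : Type*} {n m : ℕ} (G : GameGraph Q) (FAv : Fin m → Set Q)
    (FGv : Fin n → Set Q) (q : Q) (f : List Q → Q) : Set (ℕ → Q) :=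
  {π | π ∈ Lstrat G q f ∧ ∀ k, π k ∈ G.env → envStepV G FAv FGv (π k) (π (k + 1))}

section Lattice
variable {Q : Type*}

/-- Monotone set operator. -/
def AuxMono (F : Set Q → Set Q) : Prop := ∀ ⦃A B : Set Q⦄, A ⊆ B → F A ⊆ F B

lemma lfpSet_le {F : Set Q → Set Q} {S : Set Q} (h : F S ⊆ S) : lfpSet F ⊆ S :=
  Set.sInter_subset_of_mem h

lemma lfpSet_fixed {F : Set Q → Set Q} (hm : AuxMono F) : F (lfpSet F) = lfpSet F := by
  have h1 : F (lfpSet F) ⊆ lfpSet F := by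
    apply Set.subset_sInter
    intro S hS
    exact (hm (lfpSet_le hS)).trans hS
  exact h1.antisymm (lfpSet_le (hm h1))

lemma le_gfpSet {F : Set Q → Set Q} {S : Set Q} (h : S ⊆ F S) : S ⊆ gfpSet F :=
  Set.subset_sUnion_of_mem h

lemma gfpSet_fixed {F : Set Q → Set Q} (hm : AuxMono F) : F (gfpSet F) = gfpSet F := by
  have h1 : gfpSet F ⊆ F (gfpSet F) :=
    Set.sUnion_subset fun S hS => hS.trans (hm (le_gfpSet hS))
  exact (le_gfpSet (hm h1)).antisymm h1

lemma lfpSet_mono {F F' : Set Q → Set Q} (hm' : AuxMono F') (h : ∀ S, F S ⊆ F' S) :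
    lfpSet F ⊆ lfpSet F' :=
  lfpSet_le ((h _).trans (lfpSet_fixed hm').subset)

lemma gfpSet_mono {F F' : Set Q → Set Q} (h : ∀ S, F S ⊆ F' S) :
    gfpSet F ⊆ gfpSet F' :=
  Set.sUnion_subset fun S hS => le_gfpSet (hS.trans (h S))

/-- Iterative approximants of a least fixed point. -/
def aprxF (F : Set Q → Set Q) : ℕ → Set Q
  | 0 => ∅
  | j + 1 => F (aprxF F j)

lemma aprxF_le_lfp {F : Set Q → Set Q} (hm : AuxMono F) : ∀ j, aprxF F j ⊆ lfpSet F
  | 0 => Set.empty_subset _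
  | j + 1 => (hm (aprxF_le_lfp hm j)).trans (lfpSet_fixed hm).subset

lemma aprxF_succ_mono {F : Set Q → Set Q} (hm : AuxMono F) :
    ∀ j, aprxF F j ⊆ aprxF F (j + 1)
  | 0 => Set.empty_subset _
  | j + 1 => hm (aprxF_succ_mono hm j)

lemma aprxF_mono {F : Set Q → Set Q} (hm : AuxMono F) {i j : ℕ} (hij : i ≤ j) :
    aprxF F i ⊆ aprxF F j := by
  induction hij with
  | refl => exact subset_rfl
  | step _ ih => exact ih.trans (aprxF_succ_mono hm _)

lemma aprxF_le_aprxF {F F' : Set Q → Set Q} (hm : AuxMono F) (h : ∀ S, F S ⊆ F' S) :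
    ∀ j, aprxF F j ⊆ aprxF F' j
  | 0 => subset_rfl
  | j + 1 => (hm (aprxF_le_aprxF hm h j)).trans (h _)

lemma exists_aprxF_eq_lfp {F : Set Q → Set Q} [Finite Q] (hm : AuxMono F) :
    ∃ N, aprxF F N = lfpSet F := by
  obtain ⟨i, j, hne, hij⟩ := Finite.exists_ne_map_eq_of_infinite (aprxF F)
  wlog hlt : i < j generalizing i j
  · exact this j i hne.symm hij.symm (by omega)
  have hfix : F (aprxF F i) = aprxF F i := by
    have h1 : aprxF F (i + 1) ⊆ aprxF F i := by
      rw [hij]; exact aprxF_mono hm hlt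
    exact h1.antisymm (aprxF_succ_mono hm i)
  exact ⟨i, (aprxF_le_lfp hm i).antisymm (lfpSet_le hfix.subset)⟩

end Lattice

section Mono
variable {Q : Type*} (G : GameGraph Q) {FA FG : Set Q}

lemma PreE_mono {P P' : Set Q} (h : P ⊆ P') : G.PreE P ⊆ G.PreE P' :=
  fun _ hp => hp.imp fun _ hv => ⟨hv.1, h hv.2⟩

lemma Pre1_mono {P P' : Set Q} (h : P ⊆ P') : G.Pre1 P ⊆ G.Pre1 P' := by
  rintro p (⟨h1, h2⟩ | ⟨h1, h2⟩)
  · exact Or.inl ⟨h1, h2.trans h⟩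
  · exact Or.inr ⟨h1, h2.imp fun _ hv => ⟨hv.1, h hv.2⟩⟩

lemma body_mono {Z Z' Y Y' X X' W W' : Set Q} (hZ : Z ⊆ Z') (hY : Y ⊆ Y')
    (hX : X ⊆ X') (hW : W ⊆ W') :
    body G FA FG Z Y X W ⊆ body G FA FG Z' Y' X' W' := by
  apply Set.union_subset_union
  apply Set.union_subset_union
  · exact Set.inter_subset_inter_right _ (Pre1_mono G hZ)
  · exact Pre1_mono G hY
  · refine Set.inter_subset_inter_right _ ?_
    exact Set.inter_subset_inter (PreE_mono G hW)
      (Pre1_mono G (Set.union_subset_union hW (Set.diff_subset_diff_left hX)))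

lemma bodyW_mono (FA FG Z Y X : Set Q) : AuxMono (fun W => body G FA FG Z Y X W) :=
  fun _ _ h => body_mono G subset_rfl subset_rfl subset_rfl h

lemma innerW_mono {Z Y Y' X X' : Set Q} (hY : Y ⊆ Y') (hX : X ⊆ X') :
    innerW G FA FG Z Y X ⊆ innerW G FA FG Z Y' X' :=
  lfpSet_mono (bodyW_mono G FA FG Z Y' X')
    (fun _ => body_mono G subset_rfl hY hX subset_rfl)

lemma innerXm_mono (FA FG Z Y : Set Q) : AuxMono (fun X => innerW G FA FG Z Y X) :=
  fun _ _ h => innerW_mono G subset_rfl h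

lemma innerYm_mono (FA FG Z : Set Q) : AuxMono (fun Y => innerX G FA FG Z Y) :=
  fun _ _ h => gfpSet_mono (fun _ => innerW_mono G h subset_rfl)

/-- elimination/introduction helpers for `Pre1` -/
lemma mem_Pre1_env {p : Q} {P : Set Q} (h1 : p ∈ G.env) (h2 : G.delta p ⊆ P) :
    p ∈ G.Pre1 P := Or.inl ⟨h1, h2⟩

lemma mem_Pre1_sys {p v : Q} {P : Set Q} (h1 : p ∈ G.sys) (h2 : v ∈ G.delta p)
    (h3 : v ∈ P) : p ∈ G.Pre1 P := Or.inr ⟨h1, v, h2, h3⟩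

lemma Pre1_env_elim {p : Q} {P : Set Q} (h : p ∈ G.Pre1 P) (h1 : p ∈ G.env) :
    G.delta p ⊆ P := by
  rcases h with ⟨_, h2⟩ | ⟨h2, _⟩
  · exact h2
  · exact absurd h2 (Set.disjoint_left.mp G.disjoint_env_sys h1)

lemma Pre1_sys_elim {p : Q} {P : Set Q} (h : p ∈ G.Pre1 P) (h1 : p ∈ G.sys) :
    (G.delta p ∩ P).Nonempty := by
  rcases h with ⟨h2, _⟩ | ⟨_, h2⟩
  · exact absurd h1 (Set.disjoint_left.mp G.disjoint_env_sys h2)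
  · exact h2

lemma env_or_sys (p : Q) : p ∈ G.env ∨ p ∈ G.sys := by
  have : p ∈ G.env ∪ G.sys := G.union_env_sys.symm ▸ Set.mem_univ p
  exact this

end Mono

section Plays
variable {Q : Type*} (G : GameGraph Q) (q : Q) (f : List Q → Q)

lemma histUpTo_congr {h h' : ℕ → Q} {k : ℕ} (hag : ∀ i ≤ k, h i = h' i) :
    histUpTo h k = histUpTo h' k := by
  unfold histUpTo
  apply List.map_congr_left
  intro i hi
  exact hag i (by simpa using Nat.lt_succ_iff.mp (List.mem_range.mp hi))

lemma histUpTo_concat (h : ℕ → Q) (k : ℕ) :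
    histUpTo h k = (List.range k).map h ++ [h k] := by
  simp [histUpTo, List.range_succ]

/-- A finite compliant history, encoded as a function together with its length. -/
def PHist (h : ℕ → Q) (n : ℕ) : Prop :=
  h 0 = q ∧ ∀ k < n, h (k + 1) ∈ G.delta (h k) ∧
    (h k ∈ G.sys → h (k + 1) = f (histUpTo h k))

/-- The set of states reachable by compliant histories. -/
def RsetA : Set Q := {p | ∃ h n, PHist G q f h n ∧ h n = p}

lemma PHist_mono {h : ℕ → Q} {n m : ℕ} (hp : PHist G q f h n) (hm : m ≤ n) :
    PHist G q f h m :=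
  ⟨hp.1, fun k hk => hp.2 k (lt_of_lt_of_le hk hm)⟩

lemma PHist_of_Lstrat {π : ℕ → Q} (hπ : π ∈ Lstrat G q f) (n : ℕ) :
    PHist G q f π n :=
  ⟨hπ.1.1, fun k _ => ⟨hπ.1.2 k, hπ.2 k⟩⟩

lemma PHist_extend1 {h : ℕ → Q} {n : ℕ} {v : Q} (hp : PHist G q f h n)
    (hv : v ∈ G.delta (h n)) (hc : h n ∈ G.sys → v = f (histUpTo h n)) :
    PHist G q f (fun i => if i ≤ n then h i else v) (n + 1) := by
  constructor
  · simp [hp.1]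
  · intro k hk
    rcases Nat.lt_succ_iff_lt_or_eq.mp hk with hk | hk
    · have e1 : (fun i => if i ≤ n then h i else v) k = h k := by
        simp [Nat.le_of_lt hk]
      have e2 : (fun i => if i ≤ n then h i else v) (k + 1) = h (k + 1) := by
        simp [Nat.succ_le_of_lt hk]
      have e3 : histUpTo (fun i => if i ≤ n then h i else v) k = histUpTo h k :=
        histUpTo_congr fun i hi => by simp [le_trans hi (Nat.le_of_lt hk)]
      rw [e1, e2, e3]
      exact hp.2 k hk
    · have e1 : (fun i => if i ≤ n then h i else v) k = h k := by simp [hk.le]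
      have e2 : (fun i => if i ≤ n then h i else v) (k + 1) = v := by
        rw [← hk]; simp
      have e3 : histUpTo (fun i => if i ≤ n then h i else v) k = histUpTo h k :=
        histUpTo_congr fun i hi => by simp [hi.trans hk.le]
      rw [e1, e2, e3, hk]
      exact ⟨hv, hc⟩


open Classical in
/-- default continuation of a play: follow `f` at system states. -/
noncomputable def nxtQ (p : Q) (w : List Q) : Q :=
  if p ∈ G.sys then f w else (G.delta_nonempty p).some

lemma nxtQ_mem (hf : IsSysStrategy G f) (w : List Q) (p : Q) :
    nxtQ G f p (w ++ [p]) ∈ G.delta p := by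
  unfold nxtQ
  split
  · exact hf w p ‹_›
  · exact (G.delta_nonempty p).some_mem

noncomputable def extP (h : ℕ → Q) (n : ℕ) : ℕ → List Q × Q
  | 0 => (histUpTo h n, h n)
  | j + 1 => ((extP h n j).1 ++ [nxtQ G f (extP h n j).2 (extP h n j).1],
      nxtQ G f (extP h n j).2 (extP h n j).1)

/-- extension of a finite history to an infinite compliant play. -/
noncomputable def fullExt (h : ℕ → Q) (n : ℕ) : ℕ → Q :=
  fun k => if k ≤ n then h k else (extP G f h n (k - n)).2

lemma fullExt_agree {h : ℕ → Q} {n : ℕ} {k : ℕ} (hk : k ≤ n) :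
    fullExt G f h n k = h k := by simp [fullExt, hk]

lemma extP_snd (h : ℕ → Q) (n : ℕ) : ∀ j, (extP G f h n j).2 = fullExt G f h n (n + j)
  | 0 => by simp [fullExt, extP]
  | j + 1 => by
      simp only [fullExt]
      rw [if_neg (by omega : ¬ n + (j + 1) ≤ n),
        (by omega : n + (j + 1) - n = j + 1)]

lemma extP_fst (h : ℕ → Q) (n : ℕ) :
    ∀ j, (extP G f h n j).1 = histUpTo (fullExt G f h n) (n + j)
  | 0 => by
      simp only [extP, Nat.add_zero]
      exact (histUpTo_congr fun i hi => (fullExt_agree G f hi).symm)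
  | j + 1 => by
      have e1 : (extP G f h n (j + 1)).1
          = (extP G f h n j).1 ++ [(extP G f h n (j + 1)).2] := rfl
      rw [e1, extP_fst h n j, extP_snd, histUpTo_concat (fullExt G f h n) (n + (j+1))]
      rw [show n + (j + 1) = (n + j) + 1 from rfl, histUpTo_concat (fullExt G f h n) (n+j)]
      simp [List.range_succ]

lemma fullExt_step {h : ℕ → Q} {n k : ℕ} (hk : n ≤ k) :
    fullExt G f h n (k + 1)
      = nxtQ G f (fullExt G f h n k) (histUpTo (fullExt G f h n) k) := by
  have h1 : ¬ (k + 1 ≤ n) := by omega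
  have h2 : k + 1 - n = (k - n) + 1 := by omega
  have h3 : n + (k - n) = k := by omega
  have e : fullExt G f h n (k + 1) = (extP G f h n ((k - n) + 1)).2 := by
    simp only [fullExt]
    rw [if_neg h1, h2]
  rw [e]
  show nxtQ G f (extP G f h n (k - n)).2 (extP G f h n (k - n)).1 = _
  rw [extP_snd, extP_fst, h3]

lemma fullExt_mem_Lstrat (hf : IsSysStrategy G f) {h : ℕ → Q} {n : ℕ}
    (hp : PHist G q f h n) : fullExt G f h n ∈ Lstrat G q f := by
  have step : ∀ k, n ≤ k → fullExt G f h n (k + 1) ∈ G.delta (fullExt G f h n k) ∧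
      (fullExt G f h n k ∈ G.sys →
        fullExt G f h n (k + 1) = f (histUpTo (fullExt G f h n) k)) := by
    intro k hk
    rw [fullExt_step G f hk]
    unfold nxtQ
    split
    · refine ⟨?_, fun _ => rfl⟩
      rw [histUpTo_concat]
      exact hf _ _ ‹_›
    · exact ⟨(G.delta_nonempty _).some_mem, fun hs => absurd hs ‹_›⟩
  constructor
  constructor
  · rw [fullExt_agree G f (Nat.zero_le n)]
    exact hp.1
  · intro k
    rcases lt_or_ge k n with hk | hk
    · rw [fullExt_agree G f (Nat.succ_le_of_lt hk), fullExt_agree G f hk.le]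
      exact (hp.2 k hk).1
    · exact (step k hk).1
  · intro k hs
    rcases lt_or_ge k n with hk | hk
    · rw [fullExt_agree G f (Nat.succ_le_of_lt hk)]
      rw [fullExt_agree G f hk.le] at hs
      rw [(hp.2 k hk).2 hs]
      congr 1
      exact histUpTo_congr fun i hi => (fullExt_agree G f (hi.trans hk.le)).symm
    · exact (step k hk).2 hs

lemma PHist_mem_RsetA {h : ℕ → Q} {n k : ℕ} (hp : PHist G q f h n) (hk : k ≤ n) :
    h k ∈ RsetA G q f := ⟨h, k, PHist_mono G q f hp hk, rfl⟩

lemma q_mem_RsetA : q ∈ RsetA G q f := ⟨fun _ => q, 0, ⟨rfl, by omega⟩, rfl⟩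

lemma Lstrat_mem_RsetA {π : ℕ → Q} (hπ : π ∈ Lstrat G q f) (k : ℕ) :
    π k ∈ RsetA G q f := ⟨π, k, PHist_of_Lstrat G q f hπ k, rfl⟩

lemma RsetA_env_closed {p v : Q} (hp : p ∈ RsetA G q f) (he : p ∈ G.env)
    (hv : v ∈ G.delta p) : v ∈ RsetA G q f := by
  obtain ⟨h, n, hph, rfl⟩ := hp
  refine ⟨_, n + 1, PHist_extend1 G q f hph hv
    (fun hs => absurd hs (Set.disjoint_left.mp G.disjoint_env_sys he)), ?_⟩
  simp

lemma RsetA_sys_closed (hf : IsSysStrategy G f) {p : Q} (hp : p ∈ RsetA G q f)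
    (hs : p ∈ G.sys) : ∃ v ∈ G.delta p, v ∈ RsetA G q f := by
  obtain ⟨h, n, hph, rfl⟩ := hp
  have hv : f (histUpTo h n) ∈ G.delta (h n) := by
    rw [histUpTo_concat]
    exact hf _ _ hs
  refine ⟨f (histUpTo h n), hv, _, n + 1,
    PHist_extend1 G q f hph hv (fun _ => rfl), ?_⟩
  simp

end Plays

section Chain
variable {Q : Type*} (G : GameGraph Q) (q : Q) (f : List Q → Q)

/-- If from every compliant history ending in `D` one can extend within `D` while
hitting `FA`, then there is a compliant play with infinitely many `FA`-visits whose
tail stays in `D`. -/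
lemma exists_bad_play (D FA : Set Q)
    (hstep : ∀ h n, PHist G q f h n → h n ∈ D → ∃ h' n', PHist G q f h' n' ∧
      n < n' ∧ (∀ i ≤ n, h' i = h i) ∧ (∀ s, n < s → s ≤ n' → h' s ∈ D) ∧
      ∃ s, n ≤ s ∧ s ≤ n' ∧ h' s ∈ FA)
    (h0 : ∃ h n, PHist G q f h n ∧ h n ∈ D) :
    ∃ π ∈ Lstrat G q f, InfOft π FA ∧ ∃ m, ∀ s, m ≤ s → π s ∈ D := by
  classical
  obtain ⟨h0f, n0, hph0, hD0⟩ := h0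
  let T := {x : (ℕ → Q) × ℕ // PHist G q f x.1 x.2 ∧ x.1 x.2 ∈ D}
  have key : ∀ t : T, ∃ t' : T, t.1.2 < t'.1.2 ∧ (∀ i ≤ t.1.2, t'.1.1 i = t.1.1 i) ∧
      (∀ s, t.1.2 < s → s ≤ t'.1.2 → t'.1.1 s ∈ D) ∧
      ∃ s, t.1.2 ≤ s ∧ s ≤ t'.1.2 ∧ t'.1.1 s ∈ FA := by
    rintro ⟨⟨h, n⟩, hph, hD⟩
    obtain ⟨h', n', hph', hlt, hag, hwin, hFA⟩ := hstep h n hph hD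
    exact ⟨⟨(h', n'), hph', hwin n' hlt le_rfl⟩, hlt, hag, hwin, hFA⟩
  let ch : ℕ → T := fun m => Nat.rec ⟨(h0f, n0), hph0, hD0⟩ (fun _ t => (key t).choose) m
  have chs : ∀ m, (ch m).1.2 < (ch (m+1)).1.2 ∧
      (∀ i ≤ (ch m).1.2, (ch (m+1)).1.1 i = (ch m).1.1 i) ∧
      (∀ s, (ch m).1.2 < s → s ≤ (ch (m+1)).1.2 → (ch (m+1)).1.1 s ∈ D) ∧
      ∃ s, (ch m).1.2 ≤ s ∧ s ≤ (ch (m+1)).1.2 ∧ (ch (m+1)).1.1 s ∈ FA :=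
    fun m => (key (ch m)).choose_spec
  set N : ℕ → ℕ := fun m => (ch m).1.2 with hNdef
  set H : ℕ → ℕ → Q := fun m => (ch m).1.1 with hHdef
  have hNmono : ∀ a b, a ≤ b → N a ≤ N b := by
    intro a b hab
    induction hab with
    | refl => exact le_rfl
    | step _ ih => exact ih.trans (chs _).1.le
  have hNge : ∀ m, m ≤ N m := by
    intro m
    induction m with
    | zero => exact Nat.zero_le _
    | succ m ih => exact Nat.succ_le_of_lt (lt_of_le_of_lt ih (chs m).1)
  have hag : ∀ a b, a ≤ b → ∀ i ≤ N a, H b i = H a i := by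
    intro a b hab
    induction hab with
    | refl => intro i _; rfl
    | step hle ih =>
        intro i hi
        exact ((chs _).2.1 i (hi.trans (hNmono _ _ hle))).trans (ih i hi)
  set π : ℕ → Q := fun k => H k k with hπdef
  have hπa : ∀ M s, s ≤ N M → π s = H M s := by
    intro M s hs
    rcases le_total s M with hsM | hMs
    · exact (hag s M hsM s (hNge s)).symm
    · exact hag M s hMs s hs
  have hπL : π ∈ Lstrat G q f := by
    have hphm : ∀ m, PHist G q f (H m) (N m) := fun m => (ch m).2.1
    refine ⟨⟨?_, ?_⟩, ?_⟩
    · exact (hphm 0).1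
    · intro k
      have e0 : π k = H (k+1) k := hπa (k+1) k ((Nat.le_succ k).trans (hNge (k+1)))
      have e1 : π (k+1) = H (k+1) (k+1) := hπa (k+1) (k+1) (hNge (k+1))
      rw [e0, e1]
      exact ((hphm (k+1)).2 k (lt_of_lt_of_le (Nat.lt_succ_self k) (hNge (k+1)))).1
    · intro k hs
      have e0 : π k = H (k+1) k := hπa (k+1) k ((Nat.le_succ k).trans (hNge (k+1)))
      have e1 : π (k+1) = H (k+1) (k+1) := hπa (k+1) (k+1) (hNge (k+1))
      have e2 : histUpTo π k = histUpTo (H (k+1)) k :=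
        histUpTo_congr fun i hi =>
          hπa (k+1) i ((hi.trans (Nat.le_succ k)).trans (hNge (k+1)))
      rw [e0] at hs
      rw [e1, e2]
      exact ((hphm (k+1)).2 k (lt_of_lt_of_le (Nat.lt_succ_self k) (hNge (k+1)))).2 hs
  refine ⟨π, hπL, ?_, N 0, ?_⟩
  · intro n
    obtain ⟨s, hs1, hs2, hs3⟩ := (chs n).2.2.2
    refine ⟨s, (hNge n).trans hs1, ?_⟩
    rw [hπa (n+1) s hs2]
    exact hs3
  · intro s hs
    have hg : N (Nat.findGreatest (fun m => N m ≤ s) s) ≤ s :=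
      Nat.findGreatest_spec (P := fun m => N m ≤ s) (Nat.zero_le s) hs
    set g := Nat.findGreatest (fun m => N m ≤ s) s with hgdef
    have hg2 : s < N (g + 1) := by
      by_cases hgs : g + 1 ≤ s
      · by_contra hcon
        push_neg at hcon
        exact Nat.findGreatest_is_greatest (P := fun m => N m ≤ s)
          (Nat.lt_succ_self g) hgs hcon
      · have h1 := hNge (g + 1)
        omega
    rcases eq_or_lt_of_le hg with heq | hlt
    · have : π s = H g s := hπa g s heq.ge
      rw [this, ← heq]
      exact (ch g).2.2
    · have : π s = H (g+1) s := hπa (g+1) s hg2.le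
      rw [this]
      exact (chs g).2.2.1 s hlt hg2.le

end Chain

section CaseB
variable {Q : Type*} (G : GameGraph Q) (q : Q) (f : List Q → Q)

/-- A compliant history extending the history `(hs, ns)` and staying in `D` afterwards. -/
def SubHist (D : Set Q) (hs : ℕ → Q) (ns : ℕ) (h : ℕ → Q) (n : ℕ) : Prop :=
  PHist G q f h n ∧ ns ≤ n ∧ (∀ i ≤ ns, h i = hs i) ∧ ∀ t, ns < t → t ≤ n → h t ∈ D

/-- From the history `(hs,ns)` one can reach `FA` while staying in `D`. -/
def CanFAx (D FA : Set Q) (hs : ℕ → Q) (ns : ℕ) : Prop :=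
  ∃ h n, SubHist G q f D hs ns h n ∧ h n ∈ FA

/-- States reachable within `D` from the history `(hs, ns)`. -/
def X0set (D : Set Q) (hs : ℕ → Q) (ns : ℕ) : Set Q :=
  {u | ∃ h n, SubHist G q f D hs ns h n ∧ h n = u}

lemma range_map_eq {α : Type*} {g g' : ℕ → α} {m : ℕ}
    (h : (List.range m).map g = (List.range m).map g') : ∀ i < m, g i = g' i := by
  intro i hi
  have h2 := congrArg (fun l => l.getD i (g i)) h
  simpa [List.getD_eq_getElem?_getD, List.getElem?_map, List.getElem?_range hi] using h2

lemma X0_not_FA {D FA : Set Q} {hs : ℕ → Q} {ns : ℕ}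
    (hcan : ¬ CanFAx G q f D FA hs ns) :
    ∀ u ∈ X0set G q f D hs ns, u ∉ FA := by
  rintro u ⟨h, n, hsub, rfl⟩ hFA
  exact hcan ⟨h, n, hsub, hFA⟩

/-- Using condition (ii), from any subtree history one can exit to `Y` after finitely
many steps within `D`, provided `FA` is not reachable within `D`. -/
lemma exit_exists {FA Y : Set Q} {hs : ℕ → Q} {ns : ℕ}
    (hf : IsSysStrategy G f)
    (hC : prefixes (Lstrat G q f) ⊆ prefixes (Lstrat G q f ∩ LBuchi G q FA))
    (hcan : ¬ CanFAx G q f (RsetA G q f \ Y) FA hs ns)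
    {h : ℕ → Q} {n : ℕ} (hsub : SubHist G q f (RsetA G q f \ Y) hs ns h n) :
    ∃ r h', PHist G q f h' (n + r + 1) ∧ (∀ i ≤ n, h' i = h i) ∧
      (∀ t, n < t → t ≤ n + r → h' t ∈ RsetA G q f \ Y) ∧ h' (n + r + 1) ∈ Y := by
  classical
  obtain ⟨hph, hns, hagr, hwin⟩ := hsub
  have hmem : histUpTo (fullExt G f h n) n ∈ prefixes (Lstrat G q f) :=
    ⟨fullExt G f h n, fullExt_mem_Lstrat G q f hf hph, n + 1, rfl⟩
  obtain ⟨π, hπmem, k, hk⟩ := hC hmem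
  have hlen : n + 1 = k := by
    have := congrArg List.length hk
    simpa [histUpTo] using this
  subst hlen
  have hagπ : ∀ i ≤ n, π i = h i := by
    intro i hi
    have h1 := range_map_eq (hk) i (by omega)
    rw [← h1]
    exact fullExt_agree G f hi
  obtain ⟨hπL, hπB⟩ := hπmem
  obtain ⟨t, htn, htFA⟩ := hπB.2 (n + 1)
  by_cases hallin : ∀ s, n < s → s ≤ t → π s ∈ RsetA G q f \ Y
  · exfalso
    apply hcan
    refine ⟨π, t, ⟨PHist_of_Lstrat G q f hπL t, by omega, ?_, ?_⟩, htFA⟩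
    · intro i hi
      rw [hagπ i (hi.trans hns)]
      exact hagr i hi
    · intro s hs1 hs2
      rcases le_or_gt s n with hsn | hsn
      · rw [hagπ s hsn]
        exact hwin s hs1 hsn
      · exact hallin s hsn hs2
  · push_neg at hallin
    have hex : ∃ s, n < s ∧ s ≤ t ∧ π s ∉ RsetA G q f \ Y := by
      obtain ⟨s, h1, h2, h3⟩ := hallin
      exact ⟨s, h1, h2, h3⟩
    set S := Nat.find hex with hSdef
    obtain ⟨hSn, hSt, hSD⟩ := Nat.find_spec hex
    have hSY : π S ∈ Y := by
      by_contra hcontra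
      exact hSD ⟨Lstrat_mem_RsetA G q f hπL S, hcontra⟩
    have hSeq : n + (S - n - 1) + 1 = S := by omega
    refine ⟨S - n - 1, π, ?_, fun i hi => hagπ i hi, ?_, ?_⟩
    · rw [hSeq]
      exact PHist_of_Lstrat G q f hπL S
    · intro s hs1 hs2
      have hsS : s < S := by omega
      have := Nat.find_min hex hsS
      push_neg at this
      by_contra hcontra
      exact hcontra (this hs1 (by omega))
    · rw [hSeq]
      exact hSY

/-- One step of the ranking argument. -/
lemma mem_aprx_step {FA FG Y : Set Q} {hs : ℕ → Q} {ns : ℕ} {M : ℕ}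
    (hf : IsSysStrategy G f)
    (hYM : Y ⊆ aprxF (fun W => body G FA FG (RsetA G q f) Y
      (X0set G q f (RsetA G q f \ Y) hs ns ∪ Y) W) M)
    (hX0FA : ∀ u ∈ X0set G q f (RsetA G q f \ Y) hs ns, u ∉ FA)
    {h : ℕ → Q} {n : ℕ} (hsub : SubHist G q f (RsetA G q f \ Y) hs ns h n)
    {v : Q} (hval : v ∈ G.delta (h n))
    (hv : v ∈ aprxF (fun W => body G FA FG (RsetA G q f) Y
      (X0set G q f (RsetA G q f \ Y) hs ns ∪ Y) W) M) :
    h n ∈ aprxF (fun W => body G FA FG (RsetA G q f) Y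
      (X0set G q f (RsetA G q f \ Y) hs ns ∪ Y) W) (M + 1) := by
  set D := RsetA G q f \ Y with hD
  set X0 := X0set G q f D hs ns with hX0
  set F' := fun W => body G FA FG (RsetA G q f) Y (X0 ∪ Y) W with hF'
  have huX0 : h n ∈ X0 := ⟨h, n, hsub, rfl⟩
  show h n ∈ F' (aprxF F' M)
  refine Or.inr ⟨hX0FA _ huX0, ⟨v, hval, hv⟩, ?_⟩
  rcases env_or_sys G (h n) with henv | hsys
  · apply mem_Pre1_env G henv
    intro p' hp'
    have hp'R : p' ∈ RsetA G q f :=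
      RsetA_env_closed G q f (PHist_mem_RsetA G q f hsub.1 le_rfl) henv hp'
    by_cases hpY : p' ∈ Y
    · exact Or.inl (hYM hpY)
    · have hp'X0 : p' ∈ X0 := by
        refine ⟨fun i => if i ≤ n then h i else p', n + 1,
          ⟨PHist_extend1 G q f hsub.1 hp'
            (fun hsys => absurd hsys (Set.disjoint_left.mp G.disjoint_env_sys henv)),
            hsub.2.1.trans (Nat.le_succ n), ?_, ?_⟩, by simp⟩
        · intro i hi
          show (if i ≤ n then h i else p') = hs i
          rw [if_pos (hi.trans hsub.2.1)]
          exact hsub.2.2.1 i hi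
        · intro t ht1 ht2
          show (if t ≤ n then h t else p') ∈ D
          rcases le_or_gt t n with htn | htn
          · rw [if_pos htn]
            exact hsub.2.2.2 t ht1 htn
          · rw [if_neg (by omega)]
            exact ⟨hp'R, hpY⟩
      exact Or.inr ⟨Or.inl hp'X0, hX0FA _ hp'X0⟩
  · exact mem_Pre1_sys G hsys hval (Or.inl hv)

/-- The ranking argument: subtree states with an exit to `Y` in `r` steps belong to
the `(N+r+1)`-st approximant of the inner `W`-fixed point. -/
lemma rank_lemma {FA FG Y : Set Q} {hs : ℕ → Q} {ns : ℕ} {N : ℕ}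
    (hf : IsSysStrategy G f)
    (hYN : Y ⊆ aprxF (fun W => body G FA FG (RsetA G q f) Y
      (X0set G q f (RsetA G q f \ Y) hs ns ∪ Y) W) N)
    (hX0FA : ∀ u ∈ X0set G q f (RsetA G q f \ Y) hs ns, u ∉ FA) :
    ∀ r (h : ℕ → Q) (n : ℕ), SubHist G q f (RsetA G q f \ Y) hs ns h n →
      (∃ h', PHist G q f h' (n + r + 1) ∧ (∀ i ≤ n, h' i = h i) ∧
        (∀ t, n < t → t ≤ n + r → h' t ∈ RsetA G q f \ Y) ∧ h' (n + r + 1) ∈ Y) →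
      h n ∈ aprxF (fun W => body G FA FG (RsetA G q f) Y
        (X0set G q f (RsetA G q f \ Y) hs ns ∪ Y) W) (N + r + 1) := by
  set D := RsetA G q f \ Y with hD
  set X0 := X0set G q f D hs ns with hX0
  set F' := fun W => body G FA FG (RsetA G q f) Y (X0 ∪ Y) W with hF'
  have hmF' : AuxMono F' := bodyW_mono G FA FG (RsetA G q f) Y (X0 ∪ Y)
  intro r
  induction r with
  | zero =>
      intro h n hsub hex
      obtain ⟨h', hph', hag', hwin', hexit'⟩ := hex
      have hval : h' (n + 1) ∈ G.delta (h n) := by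
        have := (hph'.2 n (by omega)).1
        rwa [hag' n le_rfl] at this
      have hv' : h' (n + 0 + 1) ∈ aprxF F' N := hYN hexit'
      exact mem_aprx_step G q f hf hYN hX0FA hsub hval (by simpa using hv')
  | succ r ih =>
      intro h n hsub hex
      obtain ⟨h', hph', hag', hwin', hexit'⟩ := hex
      have hval : h' (n + 1) ∈ G.delta (h n) := by
        have := (hph'.2 n (by omega)).1
        rwa [hag' n le_rfl] at this
      have hvD : h' (n + 1) ∈ D := hwin' (n + 1) (by omega) (by omega)
      have hsub' : SubHist G q f D hs ns h' (n + 1) := by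
        refine ⟨PHist_mono G q f hph' (by omega), hsub.2.1.trans (Nat.le_succ n), ?_, ?_⟩
        · intro i hi
          rw [hag' i (hi.trans hsub.2.1)]
          exact hsub.2.2.1 i hi
        · intro t ht1 ht2
          rcases le_or_gt t n with htn | htn
          · rw [hag' t htn]
            exact hsub.2.2.2 t ht1 htn
          · have : t = n + 1 := by omega
            rw [this]
            exact hvD
      have hexi' : ∃ h'', PHist G q f h'' ((n+1) + r + 1) ∧
          (∀ i ≤ n + 1, h'' i = h' i) ∧
          (∀ t, n + 1 < t → t ≤ (n+1) + r → h'' t ∈ D) ∧ h'' ((n+1) + r + 1) ∈ Y := by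
        refine ⟨h', by rw [show n+1+r+1 = n+(r+1)+1 by omega]; exact hph',
          fun i _ => rfl, ?_, ?_⟩
        · intro t ht1 ht2
          exact hwin' t (by omega) (by omega)
        · rw [show n+1+r+1 = n+(r+1)+1 by omega]
          exact hexit'
      have hv' : h' (n + 1) ∈ aprxF F' (N + r + 1) := ih h' (n + 1) hsub' hexi'
      have := mem_aprx_step G q f (M := N + r + 1) hf
        (hYN.trans (aprxF_mono hmF' (by omega))) hX0FA hsub hval hv'
      rwa [show N + r + 1 + 1 = N + (r+1) + 1 by omega] at this

end CaseB


/-- Theorem 2 of the paper: completeness of the 4-nested fixed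
point for singleton winning conditions.  For every state `q ∉ ⟦φ₄⟧` and every system
strategy `f¹`, either (i) `∅ ≠ L_q(H,f¹) ⊆ L̄_q(H,F_A) ∪ L_q(H,F_G)` fails, or (ii)
`Pre(L_q(H,f¹)) = Pre(L_q(H,f¹) ∩ L_q(H,F_A))` fails. -/
theorem completeness_singleton {Q : Type*} [Fintype Q] (G : GameGraph Q)
    (FA FG : Set Q) (q : Q) (hq : q ∉ phi4 G FA FG)
    (f : List Q → Q) (hf : IsSysStrategy G f) :
    ¬(((Lstrat G q f).Nonempty ∧
          Lstrat G q f ⊆ (LBuchi G q FA)ᶜ ∪ LBuchi G q FG) ∧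
        prefixes (Lstrat G q f) = prefixes (Lstrat G q f ∩ LBuchi G q FA)) := by
  rintro ⟨⟨-, hB⟩, hC⟩
  have hC' : prefixes (Lstrat G q f) ⊆ prefixes (Lstrat G q f ∩ LBuchi G q FA) :=
    subset_of_eq hC
  set R := RsetA G q f with hR
  set Y := innerY G FA FG R with hYdef
  -- fixed point facts
  have hYfix : innerX G FA FG R Y = Y := lfpSet_fixed (innerYm_mono G FA FG R)
  have hXfix : innerW G FA FG R Y (innerX G FA FG R Y) = innerX G FA FG R Y :=
    gfpSet_fixed (innerXm_mono G FA FG R Y)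
  rw [hYfix] at hXfix
  have hmF : AuxMono (fun W => body G FA FG R Y Y W) := bodyW_mono G FA FG R Y Y
  have hFfix : body G FA FG R Y Y Y = Y := by
    have h1 : (fun W => body G FA FG R Y Y W) (lfpSet (fun W => body G FA FG R Y Y W))
        = lfpSet (fun W => body G FA FG R Y Y W) := lfpSet_fixed hmF
    have h2 : lfpSet (fun W => body G FA FG R Y Y W) = Y := hXfix
    exact ((congrArg (fun W => body G FA FG R Y Y W) h2).symm).trans (h1.trans h2)
  have hnotbody : ∀ p, p ∈ R → p ∉ Y → p ∉ body G FA FG R Y Y Y :=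
    fun p _ hpY hmem => hpY (hFfix ▸ hmem)
  have hPre1R : ∀ p ∈ R, p ∈ G.Pre1 R := by
    intro p hp
    rcases env_or_sys G p with henv | hsys
    · exact mem_Pre1_env G henv (fun v hv => RsetA_env_closed G q f hp henv hv)
    · obtain ⟨v, hv, hvR⟩ := RsetA_sys_closed G q f hf hp hsys
      exact mem_Pre1_sys G hsys hv hvR
  have hd1 : ∀ p, p ∈ R → p ∉ Y → p ∉ FG := by
    intro p hpR hpY hFG
    exact hnotbody p hpR hpY (Or.inl (Or.inl ⟨hFG, hPre1R p hpR⟩))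
  have hd2env : ∀ p, p ∈ R → p ∉ Y → p ∈ G.env → ∃ v ∈ G.delta p, v ∈ R ∧ v ∉ Y := by
    intro p hpR hpY henv
    by_contra hcon
    push_neg at hcon
    apply hnotbody p hpR hpY
    refine Or.inl (Or.inr (mem_Pre1_env G henv ?_))
    intro v hv
    exact hcon v hv (RsetA_env_closed G q f hpR henv hv)
  have hd2sys : ∀ p, p ∈ R → p ∉ Y → p ∈ G.sys → ∀ v ∈ G.delta p, v ∉ Y := by
    intro p hpR hpY hsys v hv hvY
    exact hnotbody p hpR hpY (Or.inl (Or.inr (mem_Pre1_sys G hsys hv hvY)))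
  -- main inclusion
  have hRY : R ⊆ Y := by
    intro p hpR
    by_contra hpY
    by_cases hall : ∀ h n, PHist G q f h n → h n ∈ R \ Y → CanFAx G q f (R \ Y) FA h n
    · -- case (a): build a compliant play visiting FA infinitely often and FG never
      have hstep : ∀ h n, PHist G q f h n → h n ∈ R \ Y → ∃ h' n', PHist G q f h' n' ∧
          n < n' ∧ (∀ i ≤ n, h' i = h i) ∧ (∀ s, n < s → s ≤ n' → h' s ∈ R \ Y) ∧
          ∃ s, n ≤ s ∧ s ≤ n' ∧ h' s ∈ FA := by
        intro h n hph hD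
        obtain ⟨h₁, n₁, ⟨hph₁, hn₁, hag₁, hwin₁⟩, hFA₁⟩ := hall h n hph hD
        have hD₁ : h₁ n₁ ∈ R \ Y := by
          rcases eq_or_lt_of_le hn₁ with heq | hlt
          · rw [← heq, hag₁ n le_rfl]
            exact hD
          · exact hwin₁ n₁ hlt le_rfl
        rcases env_or_sys G (h₁ n₁) with henv | hsys
        · obtain ⟨v, hv, hvR, hvY⟩ := hd2env _ hD₁.1 hD₁.2 henv
          refine ⟨fun i => if i ≤ n₁ then h₁ i else v, n₁ + 1,
            PHist_extend1 G q f hph₁ hv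
              (fun hsys => absurd hsys (Set.disjoint_left.mp G.disjoint_env_sys henv)),
            by omega, ?_, ?_, ⟨n₁, hn₁, by omega, ?_⟩⟩
          · intro i hi
            show (if i ≤ n₁ then h₁ i else v) = h i
            rw [if_pos (hi.trans hn₁)]
            exact hag₁ i hi
          · intro s hs1 hs2
            show (if s ≤ n₁ then h₁ s else v) ∈ R \ Y
            rcases le_or_gt s n₁ with hsn | hsn
            · rw [if_pos hsn]
              exact hwin₁ s hs1 hsn
            · rw [if_neg (by omega)]
              exact ⟨hvR, hvY⟩
          · show (if n₁ ≤ n₁ then h₁ n₁ else v) ∈ FA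
            rw [if_pos le_rfl]
            exact hFA₁
        · have hv : f (histUpTo h₁ n₁) ∈ G.delta (h₁ n₁) := by
            rw [histUpTo_concat]
            exact hf _ _ hsys
          have hvY := hd2sys _ hD₁.1 hD₁.2 hsys _ hv
          have hext := PHist_extend1 G q f hph₁ hv (fun _ => rfl)
          have hvR : (fun i => if i ≤ n₁ then h₁ i else f (histUpTo h₁ n₁)) (n₁+1) ∈ R :=
            PHist_mem_RsetA G q f hext le_rfl
          rw [show (fun i => if i ≤ n₁ then h₁ i else f (histUpTo h₁ n₁)) (n₁+1)
            = f (histUpTo h₁ n₁) by simp] at hvR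
          refine ⟨fun i => if i ≤ n₁ then h₁ i else f (histUpTo h₁ n₁), n₁ + 1, hext,
            by omega, ?_, ?_, ⟨n₁, hn₁, by omega, ?_⟩⟩
          · intro i hi
            show (if i ≤ n₁ then h₁ i else _) = h i
            rw [if_pos (hi.trans hn₁)]
            exact hag₁ i hi
          · intro s hs1 hs2
            show (if s ≤ n₁ then h₁ s else _) ∈ R \ Y
            rcases le_or_gt s n₁ with hsn | hsn
            · rw [if_pos hsn]
              exact hwin₁ s hs1 hsn
            · rw [if_neg (by omega)]
              exact ⟨hvR, hvY⟩
          · show (if n₁ ≤ n₁ then h₁ n₁ else _) ∈ FA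
            rw [if_pos le_rfl]
            exact hFA₁
      have hpD : p ∈ R \ Y := ⟨hpR, hpY⟩
      obtain ⟨h0, n0, hph0, hv0⟩ := hpD.1
      obtain ⟨π, hπL, hπFA, m, hm⟩ := exists_bad_play G q f (R \ Y) FA hstep
        ⟨h0, n0, hph0, by rw [hv0]; exact hpD⟩
      rcases hB hπL with hnotFA | hFG
      · exact hnotFA ⟨hπL.1, hπFA⟩
      · obtain ⟨s, hs1, hs2⟩ := hFG.2 m
        exact hd1 (π s) (hm s hs1).1 (hm s hs1).2 hs2
    · -- case (b): the X₀/ranking argument shows the history endpoint is in Y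
      push_neg at hall
      obtain ⟨hs, ns, hphs, hDs, hcan⟩ := hall
      obtain ⟨N, hN⟩ := exists_aprxF_eq_lfp hmF
      have hmF' : AuxMono (fun W => body G FA FG R Y
          (X0set G q f (R \ Y) hs ns ∪ Y) W) :=
        bodyW_mono G FA FG R Y (X0set G q f (R \ Y) hs ns ∪ Y)
      have hYN : Y ⊆ aprxF (fun W => body G FA FG R Y
          (X0set G q f (R \ Y) hs ns ∪ Y) W) N := by
        have h2 : lfpSet (fun W => body G FA FG R Y Y W) = Y := hXfix
        have h3 : Y = aprxF (fun W => body G FA FG R Y Y W) N := (hN.trans h2).symm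
        exact h3.subset.trans (aprxF_le_aprxF hmF
          (fun S => body_mono G subset_rfl subset_rfl Set.subset_union_right subset_rfl) N)
      have hX0FA := X0_not_FA G q f hcan
      have hsubs : SubHist G q f (R \ Y) hs ns hs ns :=
        ⟨hphs, le_rfl, fun i _ => rfl, fun t ht1 ht2 => absurd ht2 (by omega)⟩
      have hsubM : X0set G q f (R \ Y) hs ns ∪ Y ⊆ lfpSet (fun W => body G FA FG R Y
          (X0set G q f (R \ Y) hs ns ∪ Y) W) := by
        apply Set.union_subset
        · rintro u ⟨h, n, hsub, rfl⟩
          obtain ⟨r, h', hph', hag', hwin', hexit'⟩ := exit_exists G q f hf hC' hcan hsub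
          exact aprxF_le_lfp hmF' _
            (rank_lemma G q f hf hYN hX0FA r h n hsub ⟨h', hph', hag', hwin', hexit'⟩)
        · exact hYN.trans (aprxF_le_lfp hmF' N)
      have h5 : X0set G q f (R \ Y) hs ns ∪ Y ⊆ innerX G FA FG R Y := le_gfpSet hsubM
      rw [hYfix] at h5
      exact hDs.2 (h5 (Or.inl ⟨hs, ns, hsubs, rfl⟩))
  have hphi : R ⊆ phi4 G FA FG := le_gfpSet hRY
  exact hq (hphi (q_mem_RsetA G q f))

end GR1
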